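/- arXiv:1509.01039 — 2 statements merged into one kernel-verified Lean document; each statement's English description precedes it below -/
import Mathlib

section
/- Let (V, q) be a quadratic R-module with unique base 𝔅, b a quasiminimal companion of q, and define ε ∼ η on 𝔅 by: ε = η, or there is a sequence ε = ε_0, ε_1, …, ε_r = η in 𝔅 with ε_i ≠ ε_{i+1} and b(ε_i, ε_{i+1}) ≠ 0 for all i. Let {𝔅_k | k ∈ K} be the equivalence classes and W_k the submodule with base 𝔅_k. Then each W_k is an indecomposable basic submodule, and V = ⊥_{k∈K} W_k. -/
/-- `B` is a base of the `R`-module `V`. -/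
def IsBaseSet (R : Type*) [CommSemiring R] {V : Type*} [AddCommMonoid V] [Module R V]
    (B : Set V) : Prop :=
  ∀ x : V, ∃! c : B →₀ R, x = c.sum fun b r => r • (b : V)

/-- `q` is quasilinear on `S × T`. -/
def QlinOn {R : Type*} [CommSemiring R] {V : Type*} [AddCommMonoid V] [Module R V]
    (q : V → R) (S T : Set V) : Prop :=
  ∀ x ∈ S, ∀ y ∈ T, q (x + y) = q x + q y

/-- `b` is a quasiminimal companion of `q` with respect to the base `B`. -/
def Quasiminimal {R : Type*} [CommSemiring R] {V : Type*} [AddCommMonoid V] [Module R V]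
    (B : Set V) (q : V → R) (b : V →ₗ[R] V →ₗ[R] R) : Prop :=
  (∀ x y, b x y = b y x) ∧ (∀ x y, q (x + y) = q x + q y + b x y) ∧
    ∀ ε ∈ B, ∀ η ∈ B, ε ≠ η →
      QlinOn q (Submodule.span R {ε} : Submodule R V) (Submodule.span R {η} : Submodule R V) →
      b ε η = 0

/-- `W₁` is disjointly orthogonal to `W₂` with respect to the quadratic form `q`. -/
def DisjOrth {R : Type*} [CommSemiring R] {V : Type*} [AddCommMonoid V] [Module R V]
    (q : V → R) (W₁ W₂ : Submodule R V) : Prop :=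
  W₁ ⊓ W₂ = ⊥ ∧ QlinOn q (W₁ : Set V) (W₂ : Set V)

/-- The basic submodule with base `S` is indecomposable for `q`: there is no nontrivial
disjoint orthogonal decomposition of it into basic submodules. -/
def QIndecompOn {R : Type*} [CommSemiring R] {V : Type*} [AddCommMonoid V] [Module R V]
    (q : V → R) (S : Set V) : Prop :=
  ¬ ∃ S₁ S₂ : Set V, S₁ ∪ S₂ = S ∧ Disjoint S₁ S₂ ∧ S₁.Nonempty ∧ S₂.Nonempty ∧
      DisjOrth q (Submodule.span R S₁) (Submodule.span R S₂)

/-- `V` is the internal direct sum of the family of submodules `W i`. -/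
def IsInternalSum {R : Type*} [CommSemiring R] {V : Type*} [AddCommMonoid V] [Module R V]
    {ι : Type*} (W : ι → Submodule R V) : Prop :=
  ∀ x : V, ∃! c : ι →₀ V, (∀ i, c i ∈ W i) ∧ x = c.sum fun _ v => v

/-!
Base vectors in different classes are `b`-orthogonal, since a nonzero value of `b` would join
the classes; so `q` is additive across the spans of distinct classes, and these spans meet
trivially because `B` is a base. Sorting the base coordinates of a vector by class gives the
direct sum decomposition. A class cannot split orthogonally as `S₁ ∪ S₂`: a chain inside the
class from `S₁` to `S₂` has a link `ε — η` with `ε ∈ S₁` and `η ∈ S₂`, and then `q` is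
quasilinear on `Rε × Rη`, so quasiminimality forces `b ε η = 0`.
-/

open Submodule Relation

section Base

variable {R : Type*} [CommSemiring R] {V : Type*} [AddCommMonoid V] [Module R V] {B : Set V}

theorem IsBaseSet.linearIndepOn (hB : IsBaseSet R B) : LinearIndepOn R id B := by
  intro c c' h
  simp only [id_eq, Finsupp.linearCombination_apply] at h
  exact (hB _).unique rfl h

theorem IsBaseSet.top_le_span (hB : IsBaseSet R B) :
    ⊤ ≤ span R (Set.range ((↑) : B → V)) := by
  rintro x -
  obtain ⟨c, hc, -⟩ := hB x
  rw [hc]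
  exact Submodule.finsuppSum_mem _ _ _ _ fun β _ =>
    smul_mem _ _ (subset_span (Set.mem_range_self β))

noncomputable def IsBaseSet.basis (hB : IsBaseSet R B) : Module.Basis B R V :=
  .mk hB.linearIndepOn hB.top_le_span

@[simp]
theorem IsBaseSet.coe_basis (hB : IsBaseSet R B) : ⇑hB.basis = (↑) :=
  Module.Basis.coe_mk _ _

theorem IsBaseSet.image_basis_preimage (hB : IsBaseSet R B) {S : Set V} (hS : S ⊆ B) :
    hB.basis '' ((↑) ⁻¹' S) = S := by
  rw [hB.coe_basis, Subtype.image_preimage_coe, Set.inter_eq_right.mpr hS]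

theorem IsBaseSet.span_inf_span_eq_bot (hB : IsBaseSet R B) {S T : Set V} (hS : S ⊆ B)
    (hT : T ⊆ B) (hST : Disjoint S T) : span R S ⊓ span R T = ⊥ := by
  rw [← hB.image_basis_preimage hS, ← hB.image_basis_preimage hT]
  exact (hB.basis.linearIndependent.disjoint_span_image (hST.preimage _)).eq_bot

theorem IsBaseSet.mem_span_iff (hB : IsBaseSet R B) {S : Set V} (hS : S ⊆ B) {x : V} :
    x ∈ span R S ↔ ((hB.basis.repr x).support : Set B) ⊆ (↑) ⁻¹' S := by
  rw [← hB.basis.mem_span_image, hB.image_basis_preimage hS]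

variable {ι : Type*} {W : ι → Set V} {κ : B → ι}

theorem IsBaseSet.repr_apply_eq_zero_of_mem_span (hB : IsBaseSet R B) (hW : ∀ i, W i ⊆ B)
    (hκ : ∀ (β : B) i, (β : V) ∈ W i ↔ κ β = i) {i : ι} {x : V} (hx : x ∈ span R (W i))
    {β : B} (hβ : κ β ≠ i) : hB.basis.repr x β = 0 :=
  Finsupp.notMem_support_iff.mp fun hmem =>
    hβ ((hκ β i).mp ((hB.mem_span_iff (hW i)).mp hx hmem))

theorem IsBaseSet.repr_sum_apply (hB : IsBaseSet R B) (hW : ∀ i, W i ⊆ B)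
    (hκ : ∀ (β : B) i, (β : V) ∈ W i ↔ κ β = i) {c : ι →₀ V} (hc : ∀ i, c i ∈ span R (W i))
    (β : B) :
    hB.basis.repr (c.sum fun _ v => v) β = hB.basis.repr (c (κ β)) β := by
  rw [map_finsuppSum, Finsupp.sum_apply, Finsupp.sum_eq_single (κ β)]
  · exact fun i _ hi => hB.repr_apply_eq_zero_of_mem_span hW hκ (hc i) (Ne.symm hi)
  · simp

theorem IsBaseSet.eq_of_sum_eq (hB : IsBaseSet R B) (hW : ∀ i, W i ⊆ B)
    (hκ : ∀ (β : B) i, (β : V) ∈ W i ↔ κ β = i) {c c' : ι →₀ V} (hc : ∀ i, c i ∈ span R (W i))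
    (hc' : ∀ i, c' i ∈ span R (W i)) (h : (c.sum fun _ v => v) = c'.sum fun _ v => v) :
    c = c' := by
  ext i
  refine hB.basis.repr.injective (Finsupp.ext fun β => ?_)
  obtain rfl | hβ := eq_or_ne (κ β) i
  · rw [← hB.repr_sum_apply hW hκ hc, ← hB.repr_sum_apply hW hκ hc', h]
  · rw [hB.repr_apply_eq_zero_of_mem_span hW hκ (hc i) hβ,
      hB.repr_apply_eq_zero_of_mem_span hW hκ (hc' i) hβ]

theorem IsBaseSet.isInternalSum_span (hB : IsBaseSet R B) (hW : ∀ i, W i ⊆ B)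
    (hκ : ∀ (β : B) i, (β : V) ∈ W i ↔ κ β = i) :
    IsInternalSum fun i => span R (W i) := by
  classical
  intro x
  set c := (hB.basis.repr x).sum fun β r => Finsupp.single (κ β) (r • (β : V))
  have hc : ∀ i, c i ∈ span R (W i) := fun i => by
    rw [Finsupp.sum_apply]
    refine Submodule.finsuppSum_mem _ _ _ _ fun β _ => ?_
    rw [Finsupp.single_apply]
    split_ifs with h
    · exact smul_mem _ _ (subset_span ((hκ β i).mpr h))
    · exact zero_mem _
  have hx : x = c.sum fun _ v => v := by
    rw [Finsupp.sum_sum_index (fun _ => rfl) (fun _ _ _ => rfl)]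
    simp only [Finsupp.sum_single_index]
    conv_lhs => rw [← hB.basis.linearCombination_repr x]
    rw [Finsupp.linearCombination_apply, hB.coe_basis]
  exact ⟨c, ⟨hc, hx⟩, fun c' ⟨hc', hx'⟩ => hB.eq_of_sum_eq hW hκ hc' hc (hx' ▸ hx)⟩

end Base

theorem Relation.ReflTransGen.exists_boundary {α : Type*} {r : α → α → Prop} {S : Set α}
    {a c : α} (h : ReflTransGen r a c) (ha : a ∈ S) (hc : c ∉ S) : ∃ u ∈ S, ∃ v ∉ S, r u v := by
  induction h with
  | refl => exact absurd ha hc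
  | @tail m _ _ hmc ih =>
    by_cases hm : m ∈ S
    · exact ⟨m, hm, _, hc, hmc⟩
    · exact ih hm

section Quadratic

variable {R : Type*} [CommSemiring R] {V : Type*} [AddCommMonoid V] [Module R V]
  {B : Set V} {q : V → R} {b : V →ₗ[R] V →ₗ[R] R}

theorem LinearMap.apply_apply_eq_zero_of_mem_span {S T : Set V}
    (h : ∀ x ∈ S, ∀ y ∈ T, b x y = 0) {x y : V} (hx : x ∈ span R S) (hy : y ∈ span R T) :
    b x y = 0 :=
  LinearMap.eqOn_span (f := b.flip y) (g := 0)
    (fun s hs => LinearMap.eqOn_span (f := b s) (g := 0) (h s hs) hy) hx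

theorem QlinOn.mono {S T S' T' : Set V} (h : QlinOn q S T) (hS : S' ⊆ S) (hT : T' ⊆ T) :
    QlinOn q S' T' :=
  fun x hx y hy => h x (hS hx) y (hT hy)

theorem qlinOn_span_of_apply_eq_zero (hq : ∀ x y, q (x + y) = q x + q y + b x y) {S T : Set V}
    (h : ∀ x ∈ S, ∀ y ∈ T, b x y = 0) : QlinOn q (span R S) (span R T) := fun x hx y hy => by
  rw [hq, b.apply_apply_eq_zero_of_mem_span h hx hy, add_zero]

variable (B b)

def companionGraph (x y : V) : Prop :=
  x ∈ B ∧ y ∈ B ∧ x ≠ y ∧ b x y ≠ 0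

def companionClass (x : V) : Set V :=
  {y ∈ B | ReflTransGen (companionGraph B b) x y}

variable {B b}

theorem companionGraph_symm (hb : ∀ x y, b x y = b y x) : Std.Symm (companionGraph B b) :=
  ⟨fun x y ⟨hx, hy, hne, hxy⟩ => ⟨hy, hx, hne.symm, hb y x ▸ hxy⟩⟩

theorem companionClass_subset (x : V) : companionClass B b x ⊆ B :=
  fun _ hy => hy.1

theorem mem_companionClass_self {x : V} (hx : x ∈ B) : x ∈ companionClass B b x :=
  ⟨hx, .refl⟩

theorem mem_companionClass_of_companionGraph {x y z : V} (hy : y ∈ companionClass B b x)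
    (hyz : companionGraph B b y z) : z ∈ companionClass B b x :=
  ⟨hyz.2.1, hy.2.tail hyz⟩

theorem companionClass_eq_of_mem (hb : ∀ x y, b x y = b y x) {x y : V}
    (hy : y ∈ companionClass B b x) : companionClass B b y = companionClass B b x := by
  have := companionGraph_symm (B := B) hb
  ext z
  exact and_congr_right fun _ => ⟨hy.2.trans, (symm hy.2).trans⟩

theorem mem_companionClass_iff (hb : ∀ x y, b x y = b y x) {x y : V} (hy : y ∈ B) :
    y ∈ companionClass B b x ↔ companionClass B b y = companionClass B b x :=
  ⟨companionClass_eq_of_mem hb, fun h => h ▸ mem_companionClass_self hy⟩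

theorem disjoint_companionClass (hb : ∀ x y, b x y = b y x) {x y : V}
    (hne : companionClass B b x ≠ companionClass B b y) :
    Disjoint (companionClass B b x) (companionClass B b y) :=
  Set.disjoint_left.mpr fun _ hzx hzy =>
    hne ((companionClass_eq_of_mem hb hzx).symm.trans (companionClass_eq_of_mem hb hzy))

theorem apply_eq_zero_of_ne_companionClass (hb : ∀ x y, b x y = b y x) {x y ε η : V}
    (hne : companionClass B b x ≠ companionClass B b y) (hε : ε ∈ companionClass B b x)
    (hη : η ∈ companionClass B b y) : b ε η = 0 := by
  by_contra hεη
  have hηx : η ∈ companionClass B b x := by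
    obtain rfl | hne' := eq_or_ne ε η
    · exact hε
    · exact mem_companionClass_of_companionGraph hε ⟨hε.1, hη.1, hne', hεη⟩
  exact Set.disjoint_left.mp (disjoint_companionClass hb hne) hηx hη

theorem disjOrth_span_companionClass (hB : IsBaseSet R B) (hqm : Quasiminimal B q b) {x y : V}
    (hne : companionClass B b x ≠ companionClass B b y) :
    DisjOrth q (span R (companionClass B b x)) (span R (companionClass B b y)) :=
  ⟨hB.span_inf_span_eq_bot (companionClass_subset x) (companionClass_subset y)
      (disjoint_companionClass hqm.1 hne),
    qlinOn_span_of_apply_eq_zero hqm.2.1 fun _ hε _ hη =>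
      apply_eq_zero_of_ne_companionClass hqm.1 hne hε hη⟩

theorem qIndecompOn_companionClass (hqm : Quasiminimal B q b) (x : V) :
    QIndecompOn q (companionClass B b x) := by
  rintro ⟨S₁, S₂, hunion, hdisj, ⟨s₁, hs₁⟩, ⟨s₂, hs₂⟩, -, hql⟩
  have hsub₁ : S₁ ⊆ companionClass B b x := hunion ▸ Set.subset_union_left
  have hs₂_mem : s₂ ∈ companionClass B b s₁ := by
    rw [companionClass_eq_of_mem hqm.1 (hsub₁ hs₁), ← hunion]
    exact Or.inr hs₂
  obtain ⟨u, hu, v, hv, huv⟩ := hs₂_mem.2.exists_boundary hs₁ (Set.disjoint_right.mp hdisj hs₂)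
  have hvS₂ : v ∈ S₂ := by
    have hvC : v ∈ S₁ ∪ S₂ := hunion ▸ mem_companionClass_of_companionGraph (hsub₁ hu) huv
    exact hvC.resolve_left hv
  obtain ⟨huB, hvB, huv_ne, hbuv⟩ := huv
  exact hbuv (hqm.2.2 u huB v hvB huv_ne (hql.mono
    (span_mono (Set.singleton_subset_iff.mpr hu)) (span_mono (Set.singleton_subset_iff.mpr hvS₂))))

end Quadratic

theorem components_indecomposable_orth_sum_general {R : Type*} [CommSemiring R]
    {V : Type*} [AddCommMonoid V] [Module R V]
    (B : Set V) (hB : IsBaseSet R B)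
    (q : V → R)
    (b : V →ₗ[R] V →ₗ[R] R) (hqm : Quasiminimal B q b)
    (edge : V → V → Prop)
    (hedge : ∀ x y, edge x y ↔ x ∈ B ∧ y ∈ B ∧ x ≠ y ∧ b x y ≠ 0)
    (cls : V → Set V)
    (hcls : ∀ x, cls x = {y ∈ B | x = y ∨ Relation.TransGen edge x y})
    (𝒦 : Set (Set V)) (h𝒦 : 𝒦 = {C | ∃ x ∈ B, C = cls x}) :
    (∀ C ∈ 𝒦, QIndecompOn q C) ∧
      (∀ C ∈ 𝒦, ∀ C' ∈ 𝒦, C ≠ C' →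
        DisjOrth q (Submodule.span R C) (Submodule.span R C')) ∧
      IsInternalSum (fun C : 𝒦 => Submodule.span R (C : Set V)) := by
  obtain rfl : edge = companionGraph B b := by ext x y; exact hedge x y
  obtain rfl : cls = companionClass B b := by
    ext x y
    simp only [hcls, companionClass, reflTransGen_iff_eq_or_transGen, eq_comm]
  subst h𝒦
  refine ⟨?_, ?_, ?_⟩
  · rintro _ ⟨x, -, rfl⟩
    exact qIndecompOn_companionClass hqm x
  · rintro _ ⟨x, -, rfl⟩ _ ⟨y, -, rfl⟩ hne
    exact disjOrth_span_companionClass hB hqm hne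
  · refine hB.isInternalSum_span (κ := fun β => ⟨companionClass B b β, β, β.2, rfl⟩) ?_ ?_
    · rintro ⟨_, x, -, rfl⟩
      exact companionClass_subset x
    · rintro β ⟨_, x, -, rfl⟩
      exact (mem_companionClass_iff hqm.1 β.2).trans Subtype.mk_eq_mk.symm

/-- Let `(V, q)` be a quadratic module with unique base `B` and `b` a
quasiminimal companion of `q`.  For `ε, η ∈ B` let `ε ∼ η` iff `ε = η` or there is a chain
of base vectors from `ε` to `η` with consecutive members distinct and `b`-value nonzero.
Then each submodule spanned by an equivalence class is an indecomposable basic submodule,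
and `V` is the orthogonal sum of these submodules. -/
theorem components_indecomposable_orth_sum {R : Type*} [CommSemiring R]
    {V : Type*} [AddCommMonoid V] [Module R V]
    (B : Set V) (hB : IsBaseSet R B)
    (hub : ∀ B' : Set V, IsBaseSet R B' → ∀ v ∈ B', ∃ u : Rˣ, ∃ w ∈ B, v = (u : R) • w)
    (q : V → R) (hsmul : ∀ (a : R) (x : V), q (a • x) = a * a * q x)
    (b : V →ₗ[R] V →ₗ[R] R) (hqm : Quasiminimal B q b)
    (edge : V → V → Prop)
    (hedge : ∀ x y, edge x y ↔ x ∈ B ∧ y ∈ B ∧ x ≠ y ∧ b x y ≠ 0)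
    (cls : V → Set V)
    (hcls : ∀ x, cls x = {y ∈ B | x = y ∨ Relation.TransGen edge x y})
    (𝒦 : Set (Set V)) (h𝒦 : 𝒦 = {C | ∃ x ∈ B, C = cls x}) :
    (∀ C ∈ 𝒦, QIndecompOn q C) ∧
      (∀ C ∈ 𝒦, ∀ C' ∈ 𝒦, C ≠ C' →
        DisjOrth q (Submodule.span R C) (Submodule.span R C')) ∧
      IsInternalSum (fun C : 𝒦 => Submodule.span R (C : Set V)) :=
  components_indecomposable_orth_sum_general B hB q b hqm edge hedge cls hcls 𝒦 h𝒦
end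

section
/- Let (V, q) be a quadratic R-module with unique base, decomposed into indecomposable components V = ⊥_{k∈K} W_k. Then: (b) every indecomposable basic submodule U of V is contained in W_k for a unique k ∈ K; (c) the W_k are precisely the indecomposable basic orthogonal summands of V. -/
/-!
Quasiminimality of `b` makes two disjoint sets of base vectors span `q`-orthogonal submodules
exactly when `b` vanishes between them, that is, when no edge joins them. So a basic submodule
is indecomposable when its base vectors are connected in the edge graph, and it is an
orthogonal summand when no edge leaves it; the components `W_k` are spanned by the connected
components of this graph.
-/

open Submodule

namespace Relation

variable {α : Type*} {r : α → α → Prop} {S : Set α} {x a : α}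

theorem ReflTransGen.mem_of_closed (hS : ∀ a ∈ S, ∀ c, r a c → c ∈ S)
    (h : ReflTransGen r a x) (ha : a ∈ S) : x ∈ S := by
  induction h with
  | refl => exact ha
  | tail _ hcd ih => exact hS _ ih _ hcd

theorem setOf_reflTransGen_eq_of_reflTransGen [Std.Symm r] (h : ReflTransGen r x a) :
    {y | ReflTransGen r a y} = {y | ReflTransGen r x y} :=
  Set.ext fun _ => ⟨h.trans, (symm_of _ h).trans⟩

theorem eq_setOf_reflTransGen_of_closed [Std.Symm r] (hsub : S ⊆ {y | ReflTransGen r x y})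
    (hS : ∀ a ∈ S, ∀ c, r a c → c ∈ S) (ha : a ∈ S) : S = {y | ReflTransGen r x y} :=
  hsub.antisymm fun _ hy => ((symm_of _ (hsub ha)).trans hy).mem_of_closed hS ha

end Relation

theorem LinearMap.apply_eq_zero_of_mem_span {R M N P : Type*} [CommSemiring R]
    [AddCommMonoid M] [AddCommMonoid N] [AddCommMonoid P] [Module R M] [Module R N] [Module R P]
    (b : M →ₗ[R] N →ₗ[R] P) {S : Set M} {T : Set N} (h : ∀ x ∈ S, ∀ y ∈ T, b x y = 0)
    {x : M} {y : N} (hx : x ∈ span R S) (hy : y ∈ span R T) : b x y = 0 := by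
  have hT : ∀ x ∈ S, span R T ≤ LinearMap.ker (b x) := fun x hx =>
    span_le.mpr fun y hy => h x hx y hy
  exact (span_le.mpr fun x hx => hT x hx hy : span R S ≤ LinearMap.ker (b.flip y)) hx

section QuadraticModule

variable {R : Type*} [CommSemiring R] {V : Type*} [AddCommMonoid V] [Module R V]
  {B S S₁ S₂ : Set V} {q : V → R} {b : V →ₗ[R] V →ₗ[R] R} {x s : V}

namespace IsBaseSet

theorem linearIndependent (hB : IsBaseSet R B) : LinearIndependent R ((↑) : B → V) :=
  fun c d h => (hB _).unique (Finsupp.linearCombination_apply R c)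
    (h.trans (Finsupp.linearCombination_apply R d))

theorem span_inf_span_eq_bot_s8 (hB : IsBaseSet R B) (h₁ : S₁ ⊆ B) (h₂ : S₂ ⊆ B)
    (hd : Disjoint S₁ S₂) : span R S₁ ⊓ span R S₂ = ⊥ := by
  have := hB.linearIndependent.disjoint_span_image (hd.preimage ((↑) : B → V))
  rwa [Subtype.image_preimage_coe, Subtype.image_preimage_coe, Set.inter_eq_right.mpr h₁,
    Set.inter_eq_right.mpr h₂, disjoint_iff] at this

theorem mem_of_mem_span [Nontrivial R] (hB : IsBaseSet R B) (hs : s ∈ B) (hS : S ⊆ B)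
    (h : s ∈ span R S) : s ∈ S := by
  by_contra hsS
  have := hB.linearIndependent.notMem_span_image
    (show (⟨s, hs⟩ : B) ∉ ((↑) : B → V) ⁻¹' S from hsS)
  rw [Subtype.image_preimage_coe, Set.inter_eq_right.mpr hS] at this
  exact this h

end IsBaseSet

theorem Quasiminimal.disjOrth_span_iff (hqm : Quasiminimal B q b) (hB : IsBaseSet R B)
    (h₁ : S₁ ⊆ B) (h₂ : S₂ ⊆ B) (hd : Disjoint S₁ S₂) :
    DisjOrth q (span R S₁) (span R S₂) ↔ ∀ ε ∈ S₁, ∀ η ∈ S₂, b ε η = 0 := by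
  constructor
  · rintro ⟨-, hq⟩ ε hε η hη
    refine hqm.2.2 ε (h₁ hε) η (h₂ hη) (hd.ne_of_mem hε hη) fun x hx y hy => hq x ?_ y ?_
    · exact span_mono (Set.singleton_subset_iff.mpr hε) hx
    · exact span_mono (Set.singleton_subset_iff.mpr hη) hy
  · intro h
    refine ⟨hB.span_inf_span_eq_bot_s8 h₁ h₂ hd, fun x hx y hy => ?_⟩
    rw [hqm.2.1 x y, b.apply_eq_zero_of_mem_span h hx hy, add_zero]

variable (B b) in
def baseEdge (ε η : V) : Prop :=
  ε ∈ B ∧ η ∈ B ∧ ε ≠ η ∧ b ε η ≠ 0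

variable (B b) in
def baseComponent (x : V) : Set V :=
  {y | Relation.ReflTransGen (baseEdge B b) x y}

theorem Quasiminimal.stdSymm_baseEdge (hqm : Quasiminimal B q b) : Std.Symm (baseEdge B b) :=
  ⟨fun _ _ ⟨hε, hη, hne, hb⟩ => ⟨hη, hε, hne.symm, hqm.1 _ _ ▸ hb⟩⟩

theorem Quasiminimal.disjOrth_span_iff_forall_not_baseEdge (hqm : Quasiminimal B q b)
    (hB : IsBaseSet R B) (h₁ : S₁ ⊆ B) (h₂ : S₂ ⊆ B) (hd : Disjoint S₁ S₂) :
    DisjOrth q (span R S₁) (span R S₂) ↔ ∀ ε ∈ S₁, ∀ η ∈ S₂, ¬ baseEdge B b ε η := by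
  rw [hqm.disjOrth_span_iff hB h₁ h₂ hd]
  refine forall₂_congr fun ε hε => forall₂_congr fun η hη => ?_
  simp [baseEdge, h₁ hε, h₂ hη, hd.ne_of_mem hε hη]

theorem baseComponent_subset (hx : x ∈ B) : baseComponent B b x ⊆ B :=
  fun _ hy => hy.mem_of_closed (fun _ _ _ hac => hac.2.1) hx

theorem baseComponent_eq_of_mem_span (hqm : Quasiminimal B q b) (hB : IsBaseSet R B)
    (hx : x ∈ B) (hs : s ∈ B) (h : s ∈ span R (baseComponent B b x)) :
    baseComponent B b x = baseComponent B b s := by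
  -- over the zero ring `B = {0}` is a base and `0 ∈ span R ∅`
  rcases subsingleton_or_nontrivial R with _ | _
  · have := Module.subsingleton R V
    rw [Subsingleton.elim x s]
  · have := hqm.stdSymm_baseEdge
    exact (Relation.setOf_reflTransGen_eq_of_reflTransGen
      (hB.mem_of_mem_span hs (baseComponent_subset hx) h)).symm

theorem Quasiminimal.subset_baseComponent_of_qIndecompOn (hqm : Quasiminimal B q b)
    (hB : IsBaseSet R B) (hS : S ⊆ B) (hind : QIndecompOn q S) (hs : s ∈ S) :
    S ⊆ baseComponent B b s := by
  by_contra hnot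
  obtain ⟨t, htS, ht⟩ := Set.not_subset.mp hnot
  have hd : Disjoint (S ∩ baseComponent B b s) (S \ baseComponent B b s) :=
    Set.disjoint_left.mpr fun _ h₁ h₂ => h₂.2 h₁.2
  refine hind ⟨_, _, Set.inter_union_sdiff S _, hd, ⟨s, hs, .refl⟩, ⟨t, htS, ht⟩, ?_⟩
  exact (hqm.disjOrth_span_iff_forall_not_baseEdge hB (Set.inter_subset_left.trans hS)
    (Set.sdiff_subset.trans hS) hd).mpr fun _ hε _ hη hεη => hη.2 (hε.2.tail hεη)

theorem Quasiminimal.qIndecompOn_baseComponent (hqm : Quasiminimal B q b) (hB : IsBaseSet R B)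
    (hx : x ∈ B) : QIndecompOn q (baseComponent B b x) := by
  have := hqm.stdSymm_baseEdge
  rintro ⟨S₁, S₂, hun, hd, ⟨ε, hε⟩, ⟨η, hη⟩, horth⟩
  have hS₁ : S₁ ⊆ baseComponent B b x := hun ▸ Set.subset_union_left
  have hS₂ : S₂ ⊆ baseComponent B b x := hun ▸ Set.subset_union_right
  have hno := (hqm.disjOrth_span_iff_forall_not_baseEdge hB
    (hS₁.trans (baseComponent_subset hx)) (hS₂.trans (baseComponent_subset hx)) hd).mp horth
  have hclosed : ∀ a ∈ S₁, ∀ c, baseEdge B b a c → c ∈ S₁ := fun a ha c hac =>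
    ((hun ▸ (hS₁ ha).tail hac : c ∈ S₁ ∪ S₂)).resolve_right fun hc => hno a ha c hc hac
  have hS₁eq : S₁ = baseComponent B b x :=
    Relation.eq_setOf_reflTransGen_of_closed hS₁ hclosed hε
  exact Set.disjoint_left.mp hd (hS₁eq ▸ hS₂ hη) hη

theorem Quasiminimal.disjOrth_baseComponent (hqm : Quasiminimal B q b) (hB : IsBaseSet R B)
    (hx : x ∈ B) :
    DisjOrth q (span R (baseComponent B b x)) (span R (B \ baseComponent B b x)) :=
  (hqm.disjOrth_span_iff_forall_not_baseEdge hB (baseComponent_subset hx) Set.sdiff_subset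
    Set.disjoint_sdiff_right).mpr fun _ hε _ hη hεη => hη.2 (hε.tail hεη)

theorem Quasiminimal.eq_baseComponent_of_disjOrth (hqm : Quasiminimal B q b)
    (hB : IsBaseSet R B) (hS : S ⊆ B) (hind : QIndecompOn q S) (hs : s ∈ S)
    (horth : DisjOrth q (span R S) (span R (B \ S))) : S = baseComponent B b s := by
  have := hqm.stdSymm_baseEdge
  have hno := (hqm.disjOrth_span_iff_forall_not_baseEdge hB hS Set.sdiff_subset
    Set.disjoint_sdiff_right).mp horth
  refine Relation.eq_setOf_reflTransGen_of_closed
    (hqm.subset_baseComponent_of_qIndecompOn hB hS hind hs) (fun a ha c hac => ?_) hs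
  by_contra hc
  exact hno a ha c ⟨hac.2.1, hc⟩ hac

end QuadraticModule

theorem components_unique_and_are_summands_general {R : Type*} [CommSemiring R]
    {V : Type*} [AddCommMonoid V] [Module R V]
    (B : Set V) (hB : IsBaseSet R B)
    (q : V → R)
    (b : V →ₗ[R] V →ₗ[R] R) (hqm : Quasiminimal B q b)
    (edge : V → V → Prop)
    (hedge : ∀ x y, edge x y ↔ x ∈ B ∧ y ∈ B ∧ x ≠ y ∧ b x y ≠ 0)
    (cls : V → Set V)
    (hcls : ∀ x, cls x = {y ∈ B | x = y ∨ Relation.TransGen edge x y})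
    (𝒦 : Set (Set V)) (h𝒦 : 𝒦 = {C | ∃ x ∈ B, C = cls x}) :
    (∀ S : Set V, S ⊆ B → S.Nonempty → QIndecompOn q S →
      ∃! C, C ∈ 𝒦 ∧ Submodule.span R S ≤ Submodule.span R C) ∧
    (∀ S : Set V, S ⊆ B →
      ((S.Nonempty ∧ QIndecompOn q S ∧
          DisjOrth q (Submodule.span R S) (Submodule.span R (B \ S))) ↔ S ∈ 𝒦)) := by
  obtain rfl : edge = baseEdge B b := funext₂ fun x y => propext (hedge x y)
  have hcls_eq : ∀ x ∈ B, cls x = baseComponent B b x := fun x hx => by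
    ext y
    rw [hcls]
    change y ∈ B ∧ (x = y ∨ _) ↔ Relation.ReflTransGen _ x y
    rw [Relation.reflTransGen_iff_eq_or_transGen, eq_comm (a := y)]
    exact ⟨And.right, fun h => ⟨baseComponent_subset hx
      (Relation.reflTransGen_iff_eq_or_transGen.mpr (h.imp_left Eq.symm)), h⟩⟩
  have h𝒦_eq : 𝒦 = {C | ∃ x ∈ B, C = baseComponent B b x} := by
    rw [h𝒦]
    exact Set.ext fun C => exists_congr fun x => and_congr_right fun hx => by rw [hcls_eq x hx]
  subst h𝒦_eq
  refine ⟨fun S hS ⟨s, hs⟩ hind => ?_, fun S hS => ⟨?_, ?_⟩⟩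
  · refine ⟨baseComponent B b s, ⟨⟨s, hS hs, rfl⟩,
      span_mono (hqm.subset_baseComponent_of_qIndecompOn hB hS hind hs)⟩, ?_⟩
    rintro _ ⟨⟨x, hx, rfl⟩, hle⟩
    exact baseComponent_eq_of_mem_span hqm hB hx (hS hs) (hle (subset_span hs))
  · rintro ⟨⟨s, hs⟩, hind, horth⟩
    exact ⟨s, hS hs, hqm.eq_baseComponent_of_disjOrth hB hS hind hs horth⟩
  · rintro ⟨x, hx, rfl⟩
    exact ⟨⟨x, .refl⟩, hqm.qIndecompOn_baseComponent hB hx, hqm.disjOrth_baseComponent hB hx⟩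

/-- Let `(V, q)` be a quadratic module with unique base `B`, decomposed into
its indecomposable components (the submodules spanned by the equivalence classes `C ∈ 𝒦` of
base vectors). Then (b) every nonzero indecomposable basic submodule of `V` is contained in
the component of a unique class, and (c) the components are precisely the nonzero
indecomposable basic orthogonal summands of `V`. -/
theorem components_unique_and_are_summands {R : Type*} [CommSemiring R]
    {V : Type*} [AddCommMonoid V] [Module R V]
    (B : Set V) (hB : IsBaseSet R B)
    (hub : ∀ B' : Set V, IsBaseSet R B' → ∀ v ∈ B', ∃ u : Rˣ, ∃ w ∈ B, v = (u : R) • w)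
    (q : V → R) (hsmul : ∀ (a : R) (x : V), q (a • x) = a * a * q x)
    (b : V →ₗ[R] V →ₗ[R] R) (hqm : Quasiminimal B q b)
    (edge : V → V → Prop)
    (hedge : ∀ x y, edge x y ↔ x ∈ B ∧ y ∈ B ∧ x ≠ y ∧ b x y ≠ 0)
    (cls : V → Set V)
    (hcls : ∀ x, cls x = {y ∈ B | x = y ∨ Relation.TransGen edge x y})
    (𝒦 : Set (Set V)) (h𝒦 : 𝒦 = {C | ∃ x ∈ B, C = cls x}) :
    (∀ S : Set V, S ⊆ B → S.Nonempty → QIndecompOn q S →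
      ∃! C, C ∈ 𝒦 ∧ Submodule.span R S ≤ Submodule.span R C) ∧
    (∀ S : Set V, S ⊆ B →
      ((S.Nonempty ∧ QIndecompOn q S ∧
          DisjOrth q (Submodule.span R S) (Submodule.span R (B \ S))) ↔ S ∈ 𝒦)) :=
  components_unique_and_are_summands_general B hB q b hqm edge hedge cls hcls 𝒦 h𝒦
end
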